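/- For every even integer k ≥ 2, the cyclic propagator integral satisfies I_k = ∫_{[0,1]^k} ∏_{i=0}^{k−1} (fract(t_{(i+1) mod k} − t_i) − 1/2) dt₁ ⋯ dt_k = 2 · (−1)^{k/2} · ζ(k) / (2π)^k, where ζ(k) = ∑_{n=1}^{∞} n^{−k}. (Equivalently I_k = 2ζ(k)/(2πi)^k; this is the weight of the k-vertex wheel Feynman diagram in the one-loop computation of the algebraic index, producing the Â-genus.) -/

import Mathlib

open MeasureTheory Real

noncomputable section

/-- The cyclic propagator integral
`I_k = ∫_{[0,1]^k} ∏_{i=0}^{k−1} (fract(t_{(i+1) mod k} − t_i) − 1/2) dt₁ ⋯ dt_k`,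
where the propagator is `P(x) = fract(x) − 1/2` and the indices are taken cyclically. -/
def cyclicPropagatorIntegral (k : ℕ) : ℝ :=
  ∫ t in Set.univ.pi (fun _ : Fin k => Set.Icc (0:ℝ) 1),
    ∏ i : Fin k,
      (Int.fract (t ⟨((i : ℕ) + 1) % k, Nat.mod_lt _ (by have := i.isLt; omega)⟩ - t i)
        - 1/2)

/-- `ζ(k) = ∑_{n=1}^{∞} n^{−k}` as a real number. -/
def zetaSum (k : ℕ) : ℝ := ∑' n : ℕ, 1 / ((n : ℝ) + 1)^k

/-!
The propagator is the first periodic Bernoulli function, and on `ℝ/ℤ` the convolution of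
`(-1)^(m+1) B_m(fract x) / m!` with it is the same expression for `m + 1`: on each of the two
arcs `(0, x)` and `(x, 1)` the integrand is a polynomial with an explicit antiderivative.
Integrating the cyclic product one variable at a time is therefore an iterated convolution, so
`I_k = (-1)^(k+1) B_k / k!`, and Euler's evaluation of `ζ(2n)` through `B_{2n}` finishes the proof.
-/

namespace CyclicPropagator

open Set Nat

def propagator (x : ℝ) : ℝ := Int.fract x - 1 / 2

lemma propagator_periodic : Function.Periodic propagator 1 := fun x => by
  simp [propagator, Int.fract_add_one]

lemma measurable_propagator : Measurable propagator := measurable_fract.sub_const _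

lemma abs_propagator_le_one (x : ℝ) : |propagator x| ≤ 1 := by
  rw [abs_le, propagator]
  constructor <;> linarith [Int.fract_nonneg x, Int.fract_lt_one x]

/-- The `m`-fold convolution power of `propagator` on `ℝ/ℤ`: both have Fourier coefficients
`(-2πin)⁻ᵐ` at `n ≠ 0` and `0` at `n = 0`. -/
def periodicBernoulli (m : ℕ) (x : ℝ) : ℝ := (-1) ^ (m + 1) * bernoulliFun m (Int.fract x) / m !

lemma periodicBernoulli_one : periodicBernoulli 1 = propagator := by
  ext x
  simp [periodicBernoulli, propagator, bernoulliFun_one]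

lemma periodicBernoulli_periodic (m : ℕ) : Function.Periodic (periodicBernoulli m) 1 :=
  fun x => by simp [periodicBernoulli, Int.fract_add_one]

lemma periodicBernoulli_zero_right (m : ℕ) :
    periodicBernoulli m 0 = (-1) ^ (m + 1) * bernoulli m / m ! := by
  simp [periodicBernoulli, bernoulliFun_eval_zero]

lemma integral_bernoulliFun_sub_mul (m : ℕ) (c a b : ℝ) :
    ∫ t in a..b, bernoulliFun m (c - t) * (t - 1 / 2) =
      (-(bernoulliFun (m + 1) (c - b) * (b - 1 / 2)) / (m + 1)
          - bernoulliFun (m + 2) (c - b) / ((m + 1) * (m + 2)))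
        - (-(bernoulliFun (m + 1) (c - a) * (a - 1 / 2)) / (m + 1)
          - bernoulliFun (m + 2) (c - a) / ((m + 1) * (m + 2))) := by
  refine intervalIntegral.integral_eq_sub_of_hasDerivAt (f := fun t =>
    -(bernoulliFun (m + 1) (c - t) * (t - 1 / 2)) / (m + 1)
      - bernoulliFun (m + 2) (c - t) / ((m + 1) * (m + 2))) (fun t _ => ?_) ?_
  · have hc : HasDerivAt (fun t : ℝ => c - t) (-1) t := by
      simpa using (hasDerivAt_id t).const_sub c
    have h1 := (hasDerivAt_bernoulliFun (m + 1) (c - t)).comp t hc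
    have h2 := (hasDerivAt_bernoulliFun (m + 2) (c - t)).comp t hc
    refine (((h1.mul ((hasDerivAt_id t).sub_const (1 / 2))).neg.div_const ((m : ℝ) + 1)).sub
      (h2.div_const (((m : ℝ) + 1) * ((m : ℝ) + 2)))).congr_deriv ?_
    simp only [Nat.add_sub_cancel, show m + 2 - 1 = m + 1 from rfl, Function.comp_apply, id]
    push_cast
    field_simp
    ring
  · exact Continuous.intervalIntegrable (by fun_prop) _ _

lemma integral_bernoulliFun_fract_sub_mul_propagator {m : ℕ} (hm : m ≠ 0) {X : ℝ}
    (hX : X ∈ Ico (0 : ℝ) 1) :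
    ∫ t in (0 : ℝ)..1, bernoulliFun m (Int.fract (X - t)) * propagator t =
      -bernoulliFun (m + 1) X / (m + 1) := by
  obtain ⟨hX0, hX1⟩ := hX
  have below : EqOn (fun t => bernoulliFun m (X - t) * (t - 1 / 2))
      (fun t => bernoulliFun m (Int.fract (X - t)) * propagator t) (uIoo 0 X) := by
    rintro t ⟨ht0, htX⟩
    simp only [min_eq_left hX0, max_eq_right hX0] at ht0 htX
    simp only [propagator,
      Int.fract_eq_self.2 (⟨by linarith, by linarith⟩ : 0 ≤ X - t ∧ X - t < 1),
      Int.fract_eq_self.2 (⟨ht0.le, by linarith⟩ : 0 ≤ t ∧ t < 1)]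
  have above : EqOn (fun t => bernoulliFun m (X + 1 - t) * (t - 1 / 2))
      (fun t => bernoulliFun m (Int.fract (X - t)) * propagator t) (uIoo X 1) := by
    rintro t ⟨htX, ht1⟩
    simp only [min_eq_left hX1.le, max_eq_right hX1.le] at htX ht1
    have hshift : Int.fract (X - t) = X + 1 - t := by
      rw [← Int.fract_add_one, show X - t + 1 = X + 1 - t by ring, Int.fract_eq_self]
      constructor <;> linarith
    simp only [propagator, hshift, Int.fract_eq_self.2 (⟨by linarith, ht1⟩ : 0 ≤ t ∧ t < 1)]
  have hcont : ∀ c, Continuous fun t => bernoulliFun m (c - t) * (t - 1 / 2) := by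
    intro c; fun_prop
  rw [← intervalIntegral.integral_add_adjacent_intervals
      (((hcont X).intervalIntegrable 0 X).congr_uIoo below)
      (((hcont (X + 1)).intervalIntegrable X 1).congr_uIoo above),
    ← intervalIntegral.integral_congr_uIoo below, ← intervalIntegral.integral_congr_uIoo above,
    integral_bernoulliFun_sub_mul, integral_bernoulliFun_sub_mul, sub_self, sub_zero,
    add_sub_cancel_right, add_sub_cancel_left, bernoulliFun_endpoints_eq_of_ne_one (by omega),
    bernoulliFun_endpoints_eq_of_ne_one (by omega)]
  field_simp
  ring

lemma integral_periodicBernoulli_sub_mul_propagator {m : ℕ} (hm : m ≠ 0) (x : ℝ) :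
    ∫ t in (0 : ℝ)..1, periodicBernoulli m (x - t) * propagator t =
      periodicBernoulli (m + 1) x := by
  have hfract : ∀ t, Int.fract (x - t) = Int.fract (Int.fract x - t) := fun t => by
    rw [show x - t = Int.fract x - t + ⌊x⌋ by rw [Int.fract]; ring, Int.fract_add_intCast]
  simp only [periodicBernoulli, hfract, mul_div_right_comm _ _ (m ! : ℝ), mul_assoc]
  rw [intervalIntegral.integral_const_mul,
    integral_bernoulliFun_fract_sub_mul_propagator hm ⟨Int.fract_nonneg x, Int.fract_lt_one x⟩,
    Nat.factorial_succ]
  push_cast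
  field_simp
  ring

lemma integral_propagator_sub_mul_periodicBernoulli {m : ℕ} (hm : m ≠ 0) (a b : ℝ) :
    ∫ x in (0 : ℝ)..1, propagator (x - a) * periodicBernoulli m (b - x) =
      periodicBernoulli (m + 1) (b - a) := by
  have hper : Function.Periodic (fun s => periodicBernoulli m (b - a - s) * propagator s) 1 :=
    fun s => by
      simp only [sub_add_eq_sub_sub, (periodicBernoulli_periodic m).sub_eq, propagator_periodic s]
  calc ∫ x in (0 : ℝ)..1, propagator (x - a) * periodicBernoulli m (b - x)
      = ∫ s in (0 - a)..(1 - a), periodicBernoulli m (b - a - s) * propagator s := by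
        rw [← intervalIntegral.integral_comp_sub_right]
        congr 1 with x
        rw [sub_sub_sub_cancel_right, mul_comm]
    _ = periodicBernoulli (m + 1) (b - a) := by
        rw [zero_sub, sub_eq_neg_add 1, hper.intervalIntegral_add_eq (-a) 0, zero_add,
          integral_periodicBernoulli_sub_mul_propagator hm]

lemma integral_fin_succ_eq_integral_cons {α E : Type*} [MeasurableSpace α] [NormedAddCommGroup E]
    [NormedSpace ℝ E] {n : ℕ} (μ : Measure α) [SigmaFinite μ] {F : (Fin (n + 1) → α) → E}
    (hF : Integrable F (Measure.pi fun _ => μ)) :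
    ∫ t, F t ∂Measure.pi (fun _ => μ) = ∫ x, ∫ y, F (Fin.cons x y) ∂Measure.pi (fun _ => μ) ∂μ := by
  have e := (measurePreserving_piFinSuccAbove (fun _ : Fin (n + 1) => μ) 0).symm
  have hFe := (e.integrable_comp_emb (MeasurableEquiv.measurableEmbedding _)).2 hF
  rw [← e.integral_comp']
  refine (integral_prod _ hFe).trans ?_
  simp [MeasurableEquiv.piFinSuccAbove_symm_apply, Fin.insertNthEquiv, Fin.insertNth_zero']

lemma integrable_prod_propagator {α ι : Type*} [MeasurableSpace α] [Fintype ι] {μ : Measure α}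
    [IsFiniteMeasure μ] {f : ι → α → ℝ} (hf : ∀ i, Measurable (f i)) :
    Integrable (fun t => ∏ i, propagator (f i t)) μ := by
  refine Integrable.of_bound (Finset.measurable_prod _ fun i _ =>
    measurable_propagator.comp (hf i)).aestronglyMeasurable 1 (ae_of_all _ fun t => ?_)
  rw [Real.norm_eq_abs, Finset.abs_prod]
  exact Finset.prod_le_one (fun i _ => abs_nonneg _) fun i _ => abs_propagator_le_one _

/-- The propagators along the path `a → t₀ → ⋯ → t_{m-1} → b`. -/
def propagatorChain {m : ℕ} (a : ℝ) (t : Fin m → ℝ) (b : ℝ) : ℝ :=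
  ∏ i : Fin (m + 1),
    propagator ((Fin.snoc t b : Fin (m + 1) → ℝ) i - (Fin.cons a t : Fin (m + 1) → ℝ) i)

lemma propagatorChain_cons {m : ℕ} (a x : ℝ) (y : Fin m → ℝ) (b : ℝ) :
    propagatorChain a (Fin.cons x y) b = propagator (x - a) * propagatorChain x y b := by
  rw [propagatorChain, Fin.prod_univ_succ, ← Fin.cons_snoc_eq_snoc_cons]
  simp [propagatorChain]

lemma integral_propagatorChain (m : ℕ) (a b : ℝ) :
    ∫ t, propagatorChain a t b ∂Measure.pi (fun _ : Fin m => volume.restrict (Icc (0 : ℝ) 1)) =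
      periodicBernoulli (m + 1) (b - a) := by
  induction m generalizing a with
  | zero => simp [propagatorChain, periodicBernoulli_one, Fin.snoc, measureReal_def]
  | succ m ih =>
    rw [integral_fin_succ_eq_integral_cons]
    swap
    · exact integrable_prod_propagator fun i => by fun_prop
    simp only [propagatorChain_cons, integral_const_mul, ih]
    rw [integral_Icc_eq_integral_Ioc, ← intervalIntegral.integral_of_le zero_le_one,
      integral_propagator_sub_mul_periodicBernoulli m.succ_ne_zero]

lemma prod_propagator_cyclic_eq_propagatorChain {m : ℕ} (x : ℝ) (y : Fin m → ℝ) :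
    ∏ i : Fin (m + 1), (Int.fract ((Fin.cons x y : Fin (m + 1) → ℝ)
        ⟨((i : ℕ) + 1) % (m + 1), Nat.mod_lt _ m.succ_pos⟩ - (Fin.cons x y : Fin (m + 1) → ℝ) i)
        - 1 / 2) = propagatorChain x y x := by
  refine Finset.prod_congr rfl fun i _ => ?_
  congr 2
  induction i using Fin.lastCases with
  | last => simp
  | cast j =>
    rw [Fin.snoc_castSucc, show (⟨_, _⟩ : Fin (m + 1)) = j.succ from Fin.ext ?_, Fin.cons_succ]
    simp [Nat.mod_eq_of_lt (Nat.succ_lt_succ j.isLt)]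

lemma cyclicPropagatorIntegral_eq_periodicBernoulli {k : ℕ} (hk : k ≠ 0) :
    cyclicPropagatorIntegral k = periodicBernoulli k 0 := by
  obtain ⟨m, rfl⟩ := Nat.exists_eq_succ_of_ne_zero hk
  rw [cyclicPropagatorIntegral, volume_pi, Measure.restrict_pi_pi,
    integral_fin_succ_eq_integral_cons]
  swap
  · exact integrable_prod_propagator fun i => by fun_prop
  simp only [prod_propagator_cyclic_eq_propagatorChain, integral_propagatorChain, sub_self]
  simp

lemma zetaSum_two_mul {n : ℕ} (hn : n ≠ 0) :
    zetaSum (2 * n) =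
      (-1) ^ (n + 1) * 2 ^ (2 * n - 1) * π ^ (2 * n) * bernoulli (2 * n) / (2 * n)! := by
  rw [zetaSum, ← (hasSum_zeta_nat hn).tsum_eq, (hasSum_zeta_nat hn).summable.tsum_eq_zero_add]
  simp [hn]

end CyclicPropagator

open CyclicPropagator in
/-- For every even integer `k ≥ 2`, the cyclic propagator integral equals
`2 · (−1)^{k/2} · ζ(k) / (2π)^k` (equivalently `2ζ(k)/(2πi)^k`): this is the weight of the
`k`-vertex wheel Feynman diagram in the one-loop computation of the algebraic index,
producing the Â-genus. -/
theorem cyclicPropagatorIntegral_even (k : ℕ) (hk : 2 ≤ k) (hke : Even k) :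
    cyclicPropagatorIntegral k = 2 * (-1)^(k/2) * zetaSum k / (2*π)^k := by
  obtain ⟨n, rfl⟩ := hke
  obtain ⟨j, rfl⟩ : ∃ j, n = j + 1 := ⟨n - 1, by omega⟩
  rw [← two_mul, cyclicPropagatorIntegral_eq_periodicBernoulli (by omega),
    periodicBernoulli_zero_right, zetaSum_two_mul (by omega : j + 1 ≠ 0),
    show 2 * (j + 1) / 2 = j + 1 by omega, show 2 * (j + 1) - 1 = 2 * j + 1 by omega]
  field_simp
  ring

end
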